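/- arXiv:1903.03575 — 2 statements merged into one kernel-verified Lean document; each statement's English description precedes it below -/
import Mathlib

section
/- Cayley–Prüfer Theorem: For the complete graph K_n with edge weights ω_{ij} = x_i x_j for indeterminates x_1,…,x_n, the weighted spanning tree enumerator equals x_1 x_2 ⋯ x_n · (x_1 + ⋯ + x_n)^{n−2}, i.e., Σ_{T spanning tree of K_n} Π_{i=1}^n x_i^{deg_T(v_i)} = x_1 ⋯ x_n (x_1 + ⋯ + x_n)^{n−2}. -/
/-!
Fix a root `r`. Sending each vertex `u ≠ r` of a spanning tree to its neighbour `p u` on the path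
towards `r` identifies spanning trees with parent maps, and the weight of the tree is
`∏ i, x i ^ deg i = ∏_{u ≠ r} x u * x (p u)`. So it suffices to show `σ * F(A) = x(Aᶜ) * σ ^ #A`,
where `σ = ∑ i, x i` and `F(A)` sums `∏_{u ∈ A} x (p u)` over all rooted forests whose non-root
vertices are `A`. This goes by induction on `A`: cutting the edge at `v ∈ A` leaves a forest on
`A.erase v`, and `v` may be grafted back onto any vertex outside its own tree. The weight of that
tree enters the recursion, so one proves simultaneously a formula for forests marked by the
weight of the tree of a root `b`.
-/

open Finset Function

namespace CayleyPrufer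

theorem eqOn_update_of_notMem {α β : Type*} [DecidableEq α] {f : α → β} {s : Set α} {v : α}
    (hv : v ∉ s) (b : β) : Set.EqOn (update f v b) f s :=
  fun _ hw => update_of_ne (ne_of_mem_of_not_mem hw hv) b f

theorem exists_iterate_notMem_eq_of_eqOn {α : Type*} {f g : α → α} {B : Set α}
    (hfg : Set.EqOn f g B) {u : α} {k : ℕ} (hk : g^[k] u ∉ B) :
    ∃ i, g^[i] u ∉ B ∧ f^[i] u = g^[i] u := by
  induction k generalizing u with
  | zero => exact ⟨0, hk, rfl⟩
  | succ k ih =>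
    by_cases hu : u ∈ B
    · obtain ⟨i, hi, hfi⟩ := ih (u := g u) (by rwa [← iterate_succ_apply])
      refine ⟨i + 1, by rwa [iterate_succ_apply], ?_⟩
      rw [iterate_succ_apply, iterate_succ_apply, hfg hu, hfi]
    · exact ⟨0, hu, rfl⟩

section ParentMap

variable {V : Type*} {A : Finset V} {p : V → V}

/-- `p` is the parent map of a rooted forest on `V` whose roots are the vertices outside `A`:
roots are fixed, and from every vertex the iterates of `p` eventually reach a root. -/
def IsParentMap (A : Finset V) (p : V → V) : Prop :=
  (∀ u ∉ A, p u = u) ∧ ∀ u, ∃ k, p^[k] u ∉ A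

namespace IsParentMap

theorem apply_of_notMem (h : IsParentMap A p) {u : V} (hu : u ∉ A) : p u = u := h.1 u hu

theorem iterate_add_of_notMem (h : IsParentMap A p) {u : V} {k : ℕ} (hk : p^[k] u ∉ A)
    (m : ℕ) : p^[m + k] u = p^[k] u := by
  rw [iterate_add_apply, iterate_fixed (h.apply_of_notMem hk)]

theorem iterate_of_le (h : IsParentMap A p) {u : V} {k m : ℕ} (hk : p^[k] u ∉ A)
    (hkm : k ≤ m) : p^[m] u = p^[k] u := by
  rw [← Nat.sub_add_cancel hkm, h.iterate_add_of_notMem hk]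

theorem iterate_succ_ne_self (h : IsParentMap A p) {v : V} (hv : v ∈ A) (m : ℕ) :
    p^[m + 1] v ≠ v := by
  intro hper
  obtain ⟨k, hk⟩ := h.2 v
  -- a periodic point equals every point of its orbit far enough out, here the root `p^[k] v`
  have : p^[(m + 1) * k] v = v := IsPeriodicPt.mul_const hper k
  rw [← h.iterate_of_le hk (Nat.le_mul_of_pos_left k m.succ_pos), this] at hk
  exact hk hv

theorem apply_ne_self (h : IsParentMap A p) {v : V} (hv : v ∈ A) : p v ≠ v :=
  h.iterate_succ_ne_self hv 0

theorem apply_apply_ne_self (h : IsParentMap A p) {v : V} (hv : v ∈ A) : p (p v) ≠ v :=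
  h.iterate_succ_ne_self hv 1

theorem exists_iterate_notMem_le_card [Fintype V] (h : IsParentMap A p) (u : V) :
    ∃ k ≤ Fintype.card V, p^[k] u ∉ A := by
  classical
  let k := Nat.find (h.2 u)
  have hk : p^[k] u ∉ A := Nat.find_spec (h.2 u)
  refine ⟨k, ?_, hk⟩
  have hdistinct : ∀ i j, i < j → j ≤ k → p^[i] u ≠ p^[j] u := by
    intro i j hij hjk he
    have hshift : p^[k - j + i] u = p^[k] u := by
      rw [iterate_add_apply, he, ← iterate_add_apply, Nat.sub_add_cancel hjk]
    exact Nat.find_min (h.2 u) (by omega : k - j + i < k) (hshift ▸ hk)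
  have hinj : Set.InjOn (fun i => p^[i] u) (range (k + 1)) := by
    intro i hi j hj he
    simp only [coe_range, Set.mem_Iio] at hi hj
    rcases lt_trichotomy i j with hij | rfl | hji
    · exact absurd he (hdistinct i j hij (by omega))
    · rfl
    · exact absurd he.symm (hdistinct j i hji (by omega))
  have := card_le_card_of_injOn _ (fun _ _ => mem_univ _) hinj
  simp only [card_range, card_univ] at this
  omega

end IsParentMap

variable [Fintype V]

/-- The root of the tree of `u` when `p` is a parent map, since every vertex reaches its root in
at most `card V` steps (`exists_iterate_notMem_le_card`); junk otherwise. -/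
def root (p : V → V) (u : V) : V := p^[Fintype.card V] u

namespace IsParentMap

theorem root_eq_iterate (h : IsParentMap A p) {u : V} {k : ℕ} (hk : p^[k] u ∉ A) :
    root p u = p^[k] u := by
  obtain ⟨l, hl, hlA⟩ := h.exists_iterate_notMem_le_card u
  rw [root, h.iterate_of_le hlA hl]
  rcases le_total l k with hlk | hkl
  · exact (h.iterate_of_le hlA hlk).symm
  · exact h.iterate_of_le hk hkl

theorem root_notMem (h : IsParentMap A p) (u : V) : root p u ∉ A := by
  obtain ⟨k, hk⟩ := h.2 u
  rwa [h.root_eq_iterate hk]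

theorem root_of_notMem (h : IsParentMap A p) {u : V} (hu : u ∉ A) : root p u = u :=
  h.root_eq_iterate (k := 0) hu

theorem root_iterate (h : IsParentMap A p) (u : V) (i : ℕ) : root p (p^[i] u) = root p u := by
  obtain ⟨k, hk⟩ := h.2 u
  have hshift : p^[k] (p^[i] u) = p^[k] u := by
    rw [← iterate_add_apply, add_comm, h.iterate_add_of_notMem hk]
  rw [h.root_eq_iterate hk, h.root_eq_iterate (hshift ▸ hk), hshift]

theorem root_apply (h : IsParentMap A p) (u : V) : root p (p u) = root p u :=
  h.root_iterate u 1

theorem exists_iterate_eq_root {f : V → V} (h : IsParentMap A p) (hf : Set.EqOn f p A) (u : V) :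
    ∃ i, f^[i] u = root p u := by
  obtain ⟨k, hk⟩ := h.2 u
  obtain ⟨i, hi, hfi⟩ := exists_iterate_notMem_eq_of_eqOn hf (B := (A : Set V)) hk
  exact ⟨i, hfi.trans (h.root_eq_iterate hi).symm⟩

end IsParentMap

end ParentMap

section Surgery

variable {V : Type*} [DecidableEq V] {A : Finset V} {p : V → V} {v q : V}

namespace IsParentMap

theorem cut (h : IsParentMap A p) (hv : v ∈ A) :
    IsParentMap (A.erase v) (update p v v) := by
  refine ⟨fun u hu => ?_, fun u => ?_⟩
  · rcases eq_or_ne u v with rfl | huv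
    · exact Function.update_self u u p
    · rw [update_of_ne huv]
      exact h.apply_of_notMem fun huA => hu (mem_erase.2 ⟨huv, huA⟩)
  · obtain ⟨k, hk⟩ := h.2 u
    obtain ⟨i, hi, hfi⟩ := exists_iterate_notMem_eq_of_eqOn
      (eqOn_update_of_notMem (f := p) (s := ↑(A.erase v)) (notMem_erase v A) v)
      (fun hmem => hk (mem_of_mem_erase hmem))
    exact ⟨i, hfi ▸ hi⟩

variable [Fintype V]

theorem root_cut_apply_ne (h : IsParentMap A p) (hv : v ∈ A) :
    root (update p v v) (p v) ≠ v := by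
  intro hroot
  have hp : Set.EqOn p (update p v v) ↑(A.erase v) :=
    (eqOn_update_of_notMem (notMem_erase v A) v).symm
  obtain ⟨i, hi⟩ := (h.cut hv).exists_iterate_eq_root hp (p v)
  exact h.iterate_succ_ne_self hv i (by rw [iterate_succ_apply, hi, hroot])

theorem graft (h : IsParentMap A p) (hv : v ∉ A) (hq : root p q ≠ v) :
    IsParentMap (insert v A) (update p v q) := by
  have hf : Set.EqOn (update p v q) p A := eqOn_update_of_notMem hv q
  have hout : ∀ w, root p w ≠ v → root p w ∉ insert v A := fun w hw => by
    simp [hw, h.root_notMem w]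
  refine ⟨fun u hu => ?_, fun u => ?_⟩
  · rw [mem_insert, not_or] at hu
    rw [update_of_ne hu.1]
    exact h.apply_of_notMem hu.2
  · obtain ⟨i, hi⟩ := h.exists_iterate_eq_root hf u
    by_cases hu : root p u = v
    · obtain ⟨j, hj⟩ := h.exists_iterate_eq_root hf q
      refine ⟨j + 1 + i, ?_⟩
      rw [iterate_add_apply, hi, hu, iterate_succ_apply, Function.update_self, hj]
      exact hout q hq
    · exact ⟨i, hi ▸ hout u hu⟩

theorem root_graft (h : IsParentMap A p) (hv : v ∉ A) (hq : root p q ≠ v) (u : V) :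
    root (update p v q) u = if root p u = v then root p q else root p u := by
  have hf : Set.EqOn (update p v q) p A := eqOn_update_of_notMem hv q
  have h' := h.graft hv hq
  have hroot : ∀ w, root p w ≠ v → root (update p v q) w = root p w := by
    intro w hw
    obtain ⟨j, hj⟩ := h.exists_iterate_eq_root hf w
    rw [← h'.root_iterate w j, hj, h'.root_of_notMem (by simp [hw, h.root_notMem w])]
  split_ifs with hu
  · obtain ⟨i, hi⟩ := h.exists_iterate_eq_root hf u
    rw [← h'.root_iterate u i, hi, hu, ← h'.root_apply, Function.update_self, hroot q hq]
  · exact hroot u hu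

end IsParentMap

end Surgery

theorem prod_update_apply {α β M : Type*} [DecidableEq α] [CommMonoid M] {A : Finset α}
    {v : α} (hv : v ∈ A) (x : β → M) (p : α → β) (q : β) :
    ∏ u ∈ A, x (update p v q u) = x q * ∏ u ∈ A.erase v, x (p u) := by
  rw [← mul_prod_erase A _ hv, Function.update_self]
  congr 1
  exact prod_congr rfl fun u hu => by rw [update_of_ne (ne_of_mem_erase hu)]

section ForestSums

variable {V : Type*} [Fintype V] [DecidableEq V] {R : Type*} [CommRing R]
  {A : Finset V} {p : V → V} {v b : V} {x : V → R}

open Classical in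
noncomputable def parentMaps (A : Finset V) : Finset (V → V) := {p | IsParentMap A p}

theorem mem_parentMaps : p ∈ parentMaps A ↔ IsParentMap A p := by
  simp [parentMaps]

noncomputable def forestSum (x : V → R) (A : Finset V) : R :=
  ∑ p ∈ parentMaps A, ∏ u ∈ A, x (p u)

def treeWeight (x : V → R) (A : Finset V) (p : V → V) (b : V) : R :=
  ∑ u ∈ A with root p u = b, x u

noncomputable def markedForestSum (x : V → R) (A : Finset V) (b : V) : R :=
  ∑ p ∈ parentMaps A, treeWeight x A p b * ∏ u ∈ A, x (p u)

/-- Cutting the edge at `v` is a bijection onto pairs of a forest on `A.erase v` and a new parent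
`q` of `v` outside the tree of `v` (grafting onto the tree of `v` would close a cycle). -/
theorem sum_parentMaps_eq_sum_graft {M : Type*} [AddCommMonoid M] (hv : v ∈ A)
    (f : (V → V) → M) :
    ∑ p ∈ parentMaps A, f p
      = ∑ p ∈ parentMaps (A.erase v), ∑ q with root p q ≠ v, f (update p v q) := by
  rw [sum_sigma']
  refine sum_nbij' (fun p => ⟨update p v v, p v⟩) (fun s => update s.1 v s.2) ?_ ?_ ?_ ?_ ?_
  · intro p hp
    have hp := mem_parentMaps.1 hp
    simpa [mem_parentMaps] using ⟨hp.cut hv, hp.root_cut_apply_ne hv⟩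
  · rintro ⟨p, q⟩ hs
    simp only [mem_sigma, mem_parentMaps, mem_filter_univ] at hs ⊢
    simpa [insert_erase hv] using hs.1.graft (notMem_erase v A) hs.2
  · intro p _
    simp
  · rintro ⟨p, q⟩ hs
    simp only [mem_sigma, mem_parentMaps] at hs
    rw [update_idem, update_eq_self_iff.2 (hs.1.apply_of_notMem (notMem_erase v A)).symm,
      Function.update_self]
  · intro p _
    simp

theorem sum_root_eq (h : IsParentMap A p) (hb : b ∉ A) :
    ∑ q with root p q = b, x q = x b + treeWeight x A p b := by
  have hfib : ({q | root p q = b} : Finset V) = insert b {u ∈ A | root p u = b} := by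
    ext q
    by_cases hq : q ∈ A
    · simp [hq, ne_of_mem_of_not_mem hq hb]
    · simp [hq, h.root_of_notMem hq]
  rw [hfib, sum_insert (by simp [hb]), treeWeight]

theorem sum_root_ne (h : IsParentMap A p) (hv : v ∉ A) :
    ∑ q with root p q ≠ v, x q = ∑ u, x u - x v - treeWeight x A p v := by
  rw [sub_sub, ← sum_root_eq h hv, eq_sub_iff_add_eq, add_comm]
  exact sum_filter_add_sum_filter_not univ _ x

theorem treeWeight_graft (h : IsParentMap (A.erase v) p) (hv : v ∈ A) {q : V}
    (hq : root p q ≠ v) (hb : b ∉ A) :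
    treeWeight x A (update p v q) b = treeWeight x (A.erase v) p b
      + if root p q = b then x v + treeWeight x (A.erase v) p v else 0 := by
  have hbv : b ≠ v := ne_of_mem_of_not_mem hv hb |>.symm
  have hroot := h.root_graft (notMem_erase v A) hq
  have hterm : ∀ u, (if root (update p v q) u = b then x u else 0)
      = (if root p u = b then x u else 0)
        + if root p q = b then (if root p u = v then x u else 0) else 0 := by
    intro u
    rw [hroot]
    by_cases hu : root p u = v <;> by_cases hqb : root p q = b <;> simp [hu, hqb, hbv.symm]
  have hvterm : (if root (update p v q) v = b then x v else 0)
      = if root p q = b then x v else 0 := by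
    rw [hroot, h.root_of_notMem (notMem_erase v A), if_pos rfl]
  simp only [treeWeight, sum_filter]
  rw [← add_sum_erase A _ hv, hvterm, sum_congr rfl fun u _ => hterm u, sum_add_distrib]
  split_ifs
  · ring
  · simp

theorem forestSum_eq (hv : v ∈ A) :
    forestSum x A
      = (∑ u, x u - x v) * forestSum x (A.erase v) - markedForestSum x (A.erase v) v := by
  rw [forestSum, sum_parentMaps_eq_sum_graft hv, forestSum, markedForestSum, mul_sum,
    ← sum_sub_distrib]
  refine sum_congr rfl fun p hp => ?_
  simp only [prod_update_apply hv, ← sum_mul]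
  rw [sum_root_ne (mem_parentMaps.1 hp) (notMem_erase v A)]
  ring

theorem markedForestSum_eq (hv : v ∈ A) (hb : b ∉ A) :
    markedForestSum x A b
      = (∑ u, x u) * markedForestSum x (A.erase v) b + x b * x v * forestSum x (A.erase v)
        + x b * markedForestSum x (A.erase v) v := by
  have hbv : b ≠ v := ne_of_mem_of_not_mem hv hb |>.symm
  rw [markedForestSum, sum_parentMaps_eq_sum_graft hv, markedForestSum, forestSum,
    markedForestSum, mul_sum, mul_sum, mul_sum, ← sum_add_distrib, ← sum_add_distrib]
  refine sum_congr rfl fun p hp => ?_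
  have hp := mem_parentMaps.1 hp
  set Mb := treeWeight x (A.erase v) p b
  set Mv := treeWeight x (A.erase v) p v
  have hfilter : ((univ.filter fun q => root p q ≠ v).filter fun q => root p q = b)
      = univ.filter fun q => root p q = b := by
    rw [filter_filter]
    exact filter_congr fun q _ => ⟨And.right, fun hq => ⟨hq ▸ hbv, hq⟩⟩
  calc ∑ q with root p q ≠ v, treeWeight x A (update p v q) b * ∏ u ∈ A, x (update p v q u)
      = ∑ q with root p q ≠ v, (Mb * x q + if root p q = b then (x v + Mv) * x q else 0)
          * ∏ u ∈ A.erase v, x (p u) := sum_congr rfl fun q hq => by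
        rw [treeWeight_graft hp hv (mem_filter.1 hq).2 hb, prod_update_apply hv]
        split_ifs <;> ring
    _ = (Mb * ∑ q with root p q ≠ v, x q + (x v + Mv) * ∑ q with root p q = b, x q)
          * ∏ u ∈ A.erase v, x (p u) := by
        rw [← sum_mul, sum_add_distrib, ← sum_filter, hfilter, mul_sum, mul_sum]
    _ = _ := by
        rw [sum_root_ne hp (notMem_erase v A),
          sum_root_eq hp fun h => hb (mem_of_mem_erase h)]
        ring

theorem parentMaps_empty : parentMaps (∅ : Finset V) = {id} := by
  ext p
  rw [mem_parentMaps, mem_singleton]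
  refine ⟨fun h => funext fun u => h.apply_of_notMem (notMem_empty u), ?_⟩
  rintro rfl
  exact ⟨fun _ _ => rfl, fun u => ⟨0, notMem_empty u⟩⟩

theorem sum_mul_forestSum_and_markedForestSum (x : V → R) (A : Finset V) :
    (∑ u, x u) * forestSum x A = (∑ u ∈ Aᶜ, x u) * (∑ u, x u) ^ #A ∧
      ∀ b ∉ A, (∑ u, x u) * markedForestSum x A b
        = x b * (∑ u ∈ A, x u) * (∑ u, x u) ^ #A := by
  induction A using Finset.strongInduction with
  | _ A ih =>
    rcases A.eq_empty_or_nonempty with rfl | ⟨v, hv⟩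
    · simp [forestSum, markedForestSum, parentMaps_empty, treeWeight]
    obtain ⟨ihF, ihM⟩ := ih (A.erase v) (erase_ssubset hv)
    have hcard : #A = #(A.erase v) + 1 := (card_erase_add_one hv).symm
    have hcompl : ∑ u ∈ (A.erase v)ᶜ, x u = ∑ u ∈ Aᶜ, x u + x v := by
      rw [compl_erase, sum_insert (by simp [hv]), add_comm]
    have hsum : ∑ u ∈ A.erase v, x u = ∑ u ∈ A, x u - x v :=
      eq_sub_of_add_eq' (add_sum_erase A x hv)
    have htot : ∑ u ∈ A, x u + ∑ u ∈ Aᶜ, x u = ∑ u, x u := sum_add_sum_compl A x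
    rw [hcompl] at ihF
    rw [hsum] at ihM
    have ihMv := ihM v (notMem_erase v A)
    refine ⟨?_, fun b hb => ?_⟩
    · rw [forestSum_eq hv, hcard, pow_succ]
      linear_combination (∑ u, x u - x v) * ihF - ihMv
        - x v * (∑ u, x u) ^ #(A.erase v) * htot
    · rw [markedForestSum_eq hv hb, hcard, pow_succ]
      linear_combination (∑ u, x u) * ihM b (fun h => hb (mem_of_mem_erase h))
        + x b * x v * ihF + x b * ihMv + x b * x v * (∑ u, x u) ^ #(A.erase v) * htot

theorem sum_mul_forestSum (x : V → R) (A : Finset V) :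
    (∑ u, x u) * forestSum x A = (∑ u ∈ Aᶜ, x u) * (∑ u, x u) ^ #A :=
  (sum_mul_forestSum_and_markedForestSum x A).1

end ForestSums

section ParentGraph

open SimpleGraph

variable {V : Type*} {A : Finset V} {p : V → V}

def parentGraph (p : V → V) : SimpleGraph V := fromRel fun a b => p a = b

theorem parentGraph_adj {a b : V} :
    (parentGraph p).Adj a b ↔ a ≠ b ∧ (p a = b ∨ p b = a) :=
  fromRel_adj _ a b

theorem reachable_parentGraph_apply (u : V) : (parentGraph p).Reachable u (p u) := by
  by_cases hu : u = p u
  · exact hu ▸ Reachable.refl u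
  · exact Adj.reachable (parentGraph_adj.2 ⟨hu, Or.inl rfl⟩)

theorem reachable_parentGraph_iterate (u : V) (k : ℕ) :
    (parentGraph p).Reachable u (p^[k] u) := by
  induction k with
  | zero => rfl
  | succ k ih => exact ih.trans (iterate_succ_apply' p k u ▸ reachable_parentGraph_apply _)

namespace IsParentMap

theorem parentGraph_adj_iff (h : IsParentMap A p) {a b : V} :
    (parentGraph p).Adj a b ↔ (a ∈ A ∧ p a = b) ∨ (b ∈ A ∧ p b = a) := by
  rw [parentGraph_adj]
  constructor
  · rintro ⟨hab, rfl | rfl⟩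
    · exact Or.inl ⟨by_contra fun ha => hab (h.apply_of_notMem ha).symm, rfl⟩
    · exact Or.inr ⟨by_contra fun hb => hab (h.apply_of_notMem hb), rfl⟩
  · rintro (⟨ha, rfl⟩ | ⟨hb, rfl⟩)
    · exact ⟨(h.apply_ne_self ha).symm, Or.inl rfl⟩
    · exact ⟨h.apply_ne_self hb, Or.inr rfl⟩

theorem eq_of_parentGraph_eq {p' : V → V} (h : IsParentMap A p) (h' : IsParentMap A p')
    (hG : parentGraph p = parentGraph p') : p = p' := by
  funext u
  -- induction on the depth of `u`: if `p' u ≠ p u` then `p' (p u) = u`, and the induction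
  -- hypothesis `p (p u) = p' (p u)` makes `u, p u` a 2-cycle of `p`
  obtain ⟨k, hk⟩ := h.2 u
  induction k generalizing u with
  | zero => exact (h.apply_of_notMem hk).trans (h'.apply_of_notMem hk).symm
  | succ k ih =>
    have ih := ih (p u) (by rwa [← iterate_succ_apply])
    by_cases hu : u ∈ A
    · have hadj : (parentGraph p').Adj u (p u) := hG ▸ (h.parentGraph_adj_iff.2 (.inl ⟨hu, rfl⟩))
      rcases h'.parentGraph_adj_iff.1 hadj with ⟨-, hu'⟩ | ⟨-, hpu⟩
      · exact hu'.symm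
      · exact absurd (ih.trans hpu) (h.apply_apply_ne_self hu)
    · rw [h.apply_of_notMem hu, h'.apply_of_notMem hu]

variable [DecidableEq V]

theorem parentGraph_neighborFinset (h : IsParentMap A p) (i : V)
    [Fintype ((parentGraph p).neighborSet i)] :
    (parentGraph p).neighborFinset i
      = {u ∈ A | p u = i} ∪ if i ∈ A then {p i} else ∅ := by
  ext j
  rw [mem_neighborFinset, h.parentGraph_adj_iff]
  split_ifs with hi <;> simp [hi, eq_comm]

theorem degree_parentGraph (h : IsParentMap A p) (i : V)
    [Fintype ((parentGraph p).neighborSet i)] :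
    (parentGraph p).degree i = #{u ∈ A | p u = i} + if i ∈ A then 1 else 0 := by
  rw [← card_neighborFinset_eq_degree, h.parentGraph_neighborFinset, card_union_of_disjoint]
  · split_ifs <;> simp
  · split_ifs with hi
    · simpa using fun hpi hppi => h.apply_apply_ne_self hi hppi
    · exact disjoint_empty_right _

theorem edgeFinset_parentGraph (h : IsParentMap A p) [Fintype (parentGraph p).edgeSet] :
    (parentGraph p).edgeFinset = A.image fun u => s(u, p u) := by
  ext e
  induction e using Sym2.ind with
  | _ a b =>
    simp only [mem_edgeFinset, mem_edgeSet, h.parentGraph_adj_iff, mem_image, Sym2.eq_iff]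
    constructor
    · rintro (⟨ha, rfl⟩ | ⟨hb, rfl⟩)
      exacts [⟨a, ha, .inl ⟨rfl, rfl⟩⟩, ⟨b, hb, .inr ⟨rfl, rfl⟩⟩]
    · rintro ⟨u, hu, ⟨rfl, rfl⟩ | ⟨rfl, rfl⟩⟩
      exacts [.inl ⟨hu, rfl⟩, .inr ⟨hu, rfl⟩]

theorem card_edgeFinset_parentGraph (h : IsParentMap A p) [Fintype (parentGraph p).edgeSet] :
    #(parentGraph p).edgeFinset = #A := by
  rw [h.edgeFinset_parentGraph, card_image_of_injOn]
  intro u hu w hw huw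
  rcases Sym2.eq_iff.1 huw with ⟨rfl, -⟩ | ⟨rfl, hpu⟩
  · rfl
  · exact absurd hpu (h.apply_apply_ne_self hw)

variable [Fintype V]

theorem prod_pow_degree_parentGraph {M : Type*} [CommMonoid M] (h : IsParentMap A p) (x : V → M)
    [(parentGraph p).LocallyFinite] :
    ∏ i, x i ^ (parentGraph p).degree i = (∏ u ∈ A, x u) * ∏ u ∈ A, x (p u) := by
  simp only [h.degree_parentGraph, pow_add, prod_mul_distrib, pow_ite, pow_one, pow_zero,
    prod_ite_mem, univ_inter, ← prod_fiberwise' A p x, prod_const]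
  exact mul_comm _ _

theorem isTree_parentGraph {r : V} (h : IsParentMap {r}ᶜ p) : (parentGraph p).IsTree := by
  classical
  rw [isTree_iff_connected_and_card, Nat.card_eq_fintype_card, ← edgeFinset_card,
    h.card_edgeFinset_parentGraph, card_compl, card_singleton, Nat.card_eq_fintype_card,
    Nat.sub_add_cancel (Fintype.card_pos_iff.2 ⟨r⟩)]
  refine ⟨(connected_iff_exists_forall_reachable _).2 ⟨r, fun u => ?_⟩, rfl⟩
  obtain ⟨k, hk⟩ := h.2 u
  rw [mem_compl, mem_singleton, not_not] at hk
  exact hk ▸ (reachable_parentGraph_iterate u k).symm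

end IsParentMap

variable [Fintype V] [DecidableEq V] in
/-- Every tree is the parent graph of the map sending each vertex `u ≠ r` to the next vertex on
the path from `u` to `r`. -/
theorem exists_isParentMap_parentGraph_eq {T : SimpleGraph V} (hT : T.IsTree) (r : V) :
    ∃ p, IsParentMap {r}ᶜ p ∧ parentGraph p = T := by
  choose f hf hf' using fun u => hT.existsUnique_path u r
  let p u := (f u).snd
  have hr : f r = Walk.nil := (hf' r .nil .nil).symm
  have hnil {u : V} (hu : u ≠ r) : ¬ (f u).Nil := fun hn => hu hn.eq
  have hpr : p r = r := by simp [p, hr]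
  have hreach (n : ℕ) : ∀ u, (f u).length = n → p^[n] u = r := by
    induction n with
    | zero => exact fun u hu => Walk.eq_of_length_eq_zero hu
    | succ n ih =>
      intro u hu
      have hur : u ≠ r := by rintro rfl; simp [hr] at hu
      have htail : f (p u) = (f u).tail := (hf' _ _ (hf u).tail).symm
      refine iterate_succ_apply p n u ▸ ih (p u) ?_
      have := Walk.length_tail_add_one (hnil hur)
      rw [htail]
      omega
  refine ⟨p, ⟨fun u hu => ?_, fun u => ⟨(f u).length, ?_⟩⟩, ?_⟩
  · rw [mem_compl, mem_singleton, not_not] at hu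
    exact hu ▸ hpr
  · simpa using hreach _ u rfl
  · ext a b
    rw [parentGraph_adj]
    constructor
    · rintro ⟨hab, rfl | rfl⟩
      · exact Walk.adj_snd (hnil fun har => hab (har ▸ hpr.symm))
      · exact (Walk.adj_snd (hnil fun hbr => hab (by rw [hbr]; exact hpr))).symm
    · intro hab
      refine ⟨hab.ne, ?_⟩
      by_cases hb : b ∈ (f a).support
      · exact .inl (hT.isAcyclic.eq_snd_of_adj_start (hf a) hab hb).symm
      · have hcons := hf' b _ ((Walk.cons_isPath_iff hab.symm (f a)).2 ⟨hf a, hb⟩)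
        exact .inr (by simp [p, ← hcons])

end ParentGraph

open Classical in
theorem sum_isTree_prod_pow_degree {V : Type*} [Fintype V] [DecidableEq V] {R : Type*}
    [CommRing R] (x : V → R) (r : V) :
    ∑ T : {T : SimpleGraph V // T.IsTree}, ∏ i, x i ^ T.1.degree i
      = (∏ u ∈ {r}ᶜ, x u) * forestSum x {r}ᶜ := by
  rw [forestSum, mul_sum]
  symm
  refine sum_bij (fun p hp => ⟨parentGraph p, (mem_parentMaps.1 hp).isTree_parentGraph⟩)
    (fun _ _ => mem_univ _) (fun p hp p' hp' he => ?_) (fun T _ => ?_) (fun p hp => ?_)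
  · exact (mem_parentMaps.1 hp).eq_of_parentGraph_eq (mem_parentMaps.1 hp')
      (congrArg Subtype.val he)
  · obtain ⟨p, hp, hT⟩ := exists_isParentMap_parentGraph_eq T.2 r
    exact ⟨p, mem_parentMaps.2 hp, Subtype.ext hT⟩
  · exact ((mem_parentMaps.1 hp).prod_pow_degree_parentGraph x).symm

end CayleyPrufer

open CayleyPrufer

open Classical MvPolynomial in
theorem cayley_prufer {n : ℕ} (hn : 2 ≤ n) :
    (∑ T : {T : SimpleGraph (Fin n) // T ≤ ⊤ ∧ T.IsTree},
        ∏ i, (X i : MvPolynomial (Fin n) ℤ) ^ (T : SimpleGraph (Fin n)).degree i)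
      = (∏ i, (X i : MvPolynomial (Fin n) ℤ)) * (∑ i, (X i : MvPolynomial (Fin n) ℤ)) ^ (n - 2) := by
  set σ : MvPolynomial (Fin n) ℤ := ∑ i, X i
  let r : Fin n := ⟨0, by omega⟩
  have htrees : (∑ T : {T : SimpleGraph (Fin n) // T ≤ ⊤ ∧ T.IsTree},
      ∏ i, (X i : MvPolynomial (Fin n) ℤ) ^ (T : SimpleGraph (Fin n)).degree i)
      = (∏ u ∈ {r}ᶜ, X u) * forestSum X {r}ᶜ := by
    rw [← sum_isTree_prod_pow_degree]
    exact Fintype.sum_equiv (Equiv.subtypeEquivRight fun T => and_iff_right le_top) _ _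
      fun _ => rfl
  have hforest : σ * forestSum X {r}ᶜ = X r * σ ^ (n - 2) * σ := by
    have := sum_mul_forestSum (X : Fin n → MvPolynomial (Fin n) ℤ) {r}ᶜ
    rwa [compl_compl, sum_singleton, card_compl, card_singleton, Fintype.card_fin,
      show n - 1 = n - 2 + 1 by omega, pow_succ, ← mul_assoc] at this
  have hσ : σ ≠ 0 := by
    intro h
    have := congrArg (MvPolynomial.eval fun _ => (1 : ℤ)) h
    simp [σ] at this
    omega
  apply mul_left_cancel₀ hσ
  rw [htrees, ← prod_mul_prod_compl {r}, prod_singleton]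
  linear_combination (∏ u ∈ {r}ᶜ, (X u : MvPolynomial (Fin n) ℤ)) * hforest
end

section
/- In a Ferrers graph with row vertices r_1,…,r_m (where neighborhoods satisfy N(r_1) ⊇ N(r_2) ⊇ ⋯ ⊇ N(r_m)), the Schur complement S = D_R − B D_C^{−1} B^{op} constructed in the weighted Laplacian computation is upper triangular with the same diagonal as D_R; in particular its (i,j) entry is zero whenever i ≥ j in the off-diagonal correction term B D_C^{−1} B^{op}. -/
open Finset in
theorem ferrers_schur_complement_upper_triangular {m n : ℕ} (hm : 0 < m)
    (lam : Fin m → ℕ) (hanti : Antitone lam) (hpos : ∀ i, 1 ≤ lam i)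
    (hcol : ∀ j : Fin n, (j : ℕ) < lam ⟨0, hm⟩)
    (x : Fin m → ℝ) (y : Fin n → ℝ) (hx : ∀ i, 0 < x i) (hy : ∀ j, 0 < y j)
    (DR : Matrix (Fin m) (Fin m) ℝ) (DC : Matrix (Fin n) (Fin n) ℝ)
    (B : Matrix (Fin m) (Fin n) ℝ) (Bop : Matrix (Fin n) (Fin m) ℝ)
    (hDR : DR = Matrix.diagonal (fun i =>
      x i * ∑ j ∈ Finset.univ.filter (fun j : Fin n => (j : ℕ) < lam i), y j))
    (hDC : DC = Matrix.diagonal (fun j =>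
      y j * ∑ i ∈ Finset.univ.filter (fun i : Fin m => (j : ℕ) < lam i), x i))
    (hB : ∀ i j, B i j = if (j : ℕ) < lam i then -(x i * y j) else 0)
    (hBop : ∀ j i, Bop j i = if (j : ℕ) < lam i then 0 else x i * y j) :
    (∀ i j : Fin m, j ≤ i → (B * DC⁻¹ * Bop) i j = 0) ∧
    (∀ i j : Fin m, j < i → (DR - B * DC⁻¹ * Bop) i j = 0) ∧
    (∀ i : Fin m, (DR - B * DC⁻¹ * Bop) i i = DR i i) := by
  have key : ∀ i j : Fin m, j ≤ i → (B * DC⁻¹ * Bop) i j = 0 := by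
    intro i j hij
    rw [hDC, Matrix.inv_diagonal, Matrix.mul_apply]
    apply Finset.sum_eq_zero
    intro k _
    rw [Matrix.mul_diagonal, hBop]
    by_cases hk : (k : ℕ) < lam i
    · have : (k : ℕ) < lam j := lt_of_lt_of_le hk (hanti hij)
      simp [this]
    · rw [hB]
      simp [hk]
  refine ⟨key, ?_, ?_⟩
  · intro i j hij
    rw [Matrix.sub_apply, key i j hij.le, hDR,
      Matrix.diagonal_apply_ne _ (Fin.ne_of_gt hij)]
    ring
  · intro i
    rw [Matrix.sub_apply, key i i le_rfl]
    ring
end
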